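/- arXiv:2411.11133 — 12 statements merged into one kernel-verified Lean document; each statement's English description precedes it below -/
import Mathlib

section
/- A permutation π of {1,…,n} admits an interval representation using at most 2 distinct interval lengths if and only if π has no strictly decreasing subsequence of length 3 (that is, π has depth at most 2). -/
/-- An interval representation of a permutation `π` of `{1,…,n}`: intervals
`[ℓ j, r j]` with integer endpoints such that the left endpoints, in the order
given by `π`, are strictly increasing, all left endpoints precede all right
endpoints, and the right endpoints are strictly increasing in natural order. -/
def IsIntervalRep {n : ℕ} (π : Equiv.Perm (Fin n)) (ℓ r : Fin n → ℤ) : Prop :=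
  (∀ i j : Fin n, i < j → ℓ (π i) < ℓ (π j)) ∧
  (∀ i j : Fin n, ℓ i < r j) ∧
  (∀ i j : Fin n, i < j → r i < r j)

/-!
An inversion `π i > π j` with `i < j` forces the interval of `π i` to be strictly longer than
that of `π j`, so a decreasing triple needs three lengths.

Conversely, let a `321`-avoiding `π` give length `A + Δ` to its left-to-right maxima and length
`A` to the other values, with right endpoints `R`. The left endpoints come in the order of
positions as soon as `R c + Δ < R d` whenever a non-maximum `c < d` precedes a maximum `d`, and
`R x < R y + Δ` for every inversion `(x, y)`. An inversion always pairs a maximum with a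
non-maximum, and the value interval `[y, x]` contains no pair `c, d` of the first kind, or a
`321` pattern appears. "The value interval `[b, a]` contains such a pair" is monotone in both
ends, hence a semiorder, and the Scott–Suppes argument represents it as `R b + Δ < R a`:
insert the values from the bottom up, doubling the scale at each step to make room.
-/

theorem exists_int_between_of_add_one_lt {s t : Finset ℤ} (h : ∀ x ∈ s, ∀ y ∈ t, x + 1 < y) :
    ∃ w, (∀ x ∈ s, x < w) ∧ ∀ y ∈ t, w < y := by
  rcases s.eq_empty_or_nonempty with rfl | hs
  · obtain ⟨c, hc⟩ := t.bddBelow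
    exact ⟨c - 1, by simp, fun y hy => by linarith [hc hy]⟩
  · exact ⟨s.max' hs + 1, fun x hx => Int.lt_add_one_iff.2 (s.le_max' x hx),
      fun y hy => h _ (s.max'_mem hs) y hy⟩

section UnitInterval

variable {α : Type*} [LinearOrder α] {Q : α → α → Prop} {s : Finset α} {R : α → ℤ} {Δ : ℤ}

def IsUnitIntervalRep (Q : α → α → Prop) (s : Finset α) (R : α → ℤ) (Δ : ℤ) : Prop :=
  0 < Δ ∧ StrictMonoOn R s ∧
    ∀ b ∈ s, ∀ a ∈ s, b < a → (Q b a → R b + Δ < R a) ∧ (¬ Q b a → R a < R b + Δ)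

theorem IsUnitIntervalRep.exists_gap (hQ : ∀ ⦃b a b' a' : α⦄, Q b a → b' ≤ b → a ≤ a' → Q b' a')
    (h : IsUnitIntervalRep Q s R Δ) {a : α} (has : ∀ x ∈ s, x < a) :
    ∃ w, (∀ b ∈ s, 2 * R b < w) ∧ (∀ b ∈ s, Q b a → 2 * R b + 2 * Δ < w) ∧
      ∀ b ∈ s, ¬ Q b a → w < 2 * R b + 2 * Δ := by
  classical
  obtain ⟨hΔ, hR, hrep⟩ := h
  have hsep : ∀ x ∈ s.image (2 * R ·) ∪ (s.filter (Q · a)).image (2 * R · + 2 * Δ),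
      ∀ y ∈ (s.filter (¬ Q · a)).image (2 * R · + 2 * Δ), x + 1 < y := by
    simp only [Finset.mem_union, Finset.mem_image, Finset.mem_filter]
    rintro _ (⟨b, hb, rfl⟩ | ⟨b, ⟨hb, hQba⟩, rfl⟩) _ ⟨b', ⟨hb', hQb'a⟩, rfl⟩
    · have : R b < R b' + Δ := by
        rcases lt_or_ge b' b with hb'b | hbb'
        · exact (hrep b' hb' b hb hb'b).2 fun hQb'b => hQb'a (hQ hQb'b le_rfl (has b hb).le)
        · linarith [hR.monotoneOn hb hb' hbb']
      linarith
    · have : R b < R b' := hR hb hb' (lt_of_not_ge fun hb'b => hQb'a (hQ hQba hb'b le_rfl))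
      linarith
  obtain ⟨w, hlow, hup⟩ := exists_int_between_of_add_one_lt hsep
  refine ⟨w, fun b hb => hlow _ ?_, fun b hb hQba => hlow _ ?_, fun b hb hQba => hup _ ?_⟩ <;>
    simp only [Finset.mem_union, Finset.mem_image, Finset.mem_filter]
  exacts [.inl ⟨b, hb, rfl⟩, .inr ⟨b, ⟨hb, hQba⟩, rfl⟩, ⟨b, ⟨hb, hQba⟩, rfl⟩]

theorem IsUnitIntervalRep.insert (h : IsUnitIntervalRep Q s R Δ) {a : α} (has : ∀ x ∈ s, x < a)
    {w : ℤ} (hw : ∀ b ∈ s, 2 * R b < w) (hQw : ∀ b ∈ s, Q b a → 2 * R b + 2 * Δ < w)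
    (hwQ : ∀ b ∈ s, ¬ Q b a → w < 2 * R b + 2 * Δ) :
    IsUnitIntervalRep Q (insert a s) (fun x => if x = a then w else 2 * R x) (2 * Δ) := by
  obtain ⟨hΔ, hR, hrep⟩ := h
  have hR's : ∀ b ∈ s, (if b = a then w else 2 * R b) = 2 * R b := fun b hb =>
    if_neg (has b hb).ne
  refine ⟨by positivity, ?_, ?_⟩
  · intro x hx y hy hxy
    simp only [Finset.coe_insert, Set.mem_insert_iff, Finset.mem_coe] at hx hy
    rcases hx with rfl | hx <;> rcases hy with rfl | hy
    · exact absurd hxy (lt_irrefl _)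
    · exact absurd (has y hy) hxy.not_gt
    · simpa [hR's x hx] using hw x hx
    · simpa only [hR's x hx, hR's y hy, Nat.ofNat_pos, mul_lt_mul_iff_right₀] using hR hx hy hxy
  · intro b hb c hc hbc
    rw [Finset.mem_insert] at hb hc
    rcases hb with rfl | hb
    · rcases hc with rfl | hc
      · exact absurd hbc (lt_irrefl _)
      · exact absurd (has c hc) hbc.not_gt
    rcases hc with rfl | hc
    · simp only [hR's b hb, if_pos]
      exact ⟨hQw b hb, hwQ b hb⟩
    · simp only [hR's b hb, hR's c hc]
      obtain ⟨h₁, h₂⟩ := hrep b hb c hc hbc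
      exact ⟨fun hQbc => by linarith [h₁ hQbc], fun hQbc => by linarith [h₂ hQbc]⟩

theorem exists_isUnitIntervalRep (hQ : ∀ ⦃b a b' a' : α⦄, Q b a → b' ≤ b → a ≤ a' → Q b' a')
    (s : Finset α) : ∃ R Δ, IsUnitIntervalRep Q s R Δ := by
  induction s using Finset.induction_on_max with
  | empty => exact ⟨0, 1, one_pos, fun _ h => absurd h (Finset.notMem_empty _), by simp⟩
  | insert a s has ih =>
    obtain ⟨R, Δ, h⟩ := ih
    obtain ⟨w, hw, hQw, hwQ⟩ := h.exists_gap hQ has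
    exact ⟨_, _, h.insert has hw hQw hwQ⟩

end UnitInterval

namespace Equiv.Perm

variable {α : Type*} [LinearOrder α] (π : Equiv.Perm α)

/-- Read `π` as the word `π 0, π 1, …`; its positions are given by `π.symm`. -/
def IsLeftToRightMax (v : α) : Prop :=
  ∀ u, v < u → π.symm v < π.symm u

def IsAscentToMax (c d : α) : Prop :=
  c < d ∧ ¬ π.IsLeftToRightMax c ∧ π.IsLeftToRightMax d ∧ π.symm c < π.symm d

def SpansAscentToMax (b a : α) : Prop :=
  ∃ c d, π.IsAscentToMax c d ∧ b ≤ c ∧ d ≤ a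

variable {π}

theorem SpansAscentToMax.mono {b a b' a' : α} (h : π.SpansAscentToMax b a) (hb : b' ≤ b)
    (ha : a ≤ a') : π.SpansAscentToMax b' a' :=
  let ⟨c, d, hcd, hbc, hda⟩ := h
  ⟨c, d, hcd, hb.trans hbc, hda.trans ha⟩

theorem exists_decreasing_triple_of_symm_lt {u v w : α} (huv : π.symm u < π.symm v)
    (hvw : π.symm v < π.symm w) (hvu : v < u) (hwv : w < v) :
    ∃ i j k, i < j ∧ j < k ∧ π j < π i ∧ π k < π j :=
  ⟨_, _, _, huv, hvw, by simpa using hvu, by simpa using hwv⟩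

section Avoiding

variable (h : ¬ ∃ i j k, i < j ∧ j < k ∧ π j < π i ∧ π k < π j)
include h

theorem isLeftToRightMax_of_inversion {x y : α} (hxy : π.symm x < π.symm y) (hyx : y < x) :
    π.IsLeftToRightMax x := by
  intro u hxu
  by_contra hux
  have hux : π.symm u < π.symm x := (not_lt.1 hux).lt_of_ne (π.symm.injective.ne hxu.ne')
  exact h (exists_decreasing_triple_of_symm_lt hux hxy hxu hyx)

theorem not_spansAscentToMax_of_inversion {x y : α} (hxy : π.symm x < π.symm y) :
    ¬ π.SpansAscentToMax y x := by
  rintro ⟨c, d, ⟨hcd, hc, hd, hpcd⟩, hyc, hdx⟩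
  have hpdx : π.symm d ≤ π.symm x :=
    hdx.eq_or_lt.elim (fun e => e ▸ le_rfl) fun hdx => (hd x hdx).le
  have hpcy : π.symm c < π.symm y := (hpcd.trans_le hpdx).trans hxy
  have hyc : y < c := hyc.lt_of_ne (by rintro rfl; exact lt_irrefl _ hpcy)
  -- `c` is not a maximum, so a larger value `e` precedes it, and `e, c, y` is a `321`
  simp only [IsLeftToRightMax, not_forall, not_lt] at hc
  obtain ⟨e, hce, hpec⟩ := hc
  exact h (exists_decreasing_triple_of_symm_lt
    (hpec.lt_of_ne (π.symm.injective.ne hce.ne')) hpcy hce hyc)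

theorem leftEndpoint_lt_of_symm_lt {R ℓ : α → ℤ} {Δ : ℤ} (hR : StrictMono R) (hΔ : 0 ≤ Δ)
    (hmax : ∀ v, π.IsLeftToRightMax v → ℓ v = R v - Δ)
    (hnonmax : ∀ v, ¬ π.IsLeftToRightMax v → ℓ v = R v)
    (hasc : ∀ c d, π.IsAscentToMax c d → R c + Δ < R d)
    (hinv : ∀ y x, y < x → ¬ π.SpansAscentToMax y x → R x < R y + Δ)
    {x y : α} (hxy : π.symm x < π.symm y) : ℓ x < ℓ y := by
  rcases lt_trichotomy x y with hlt | rfl | hgt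
  · by_cases hx : π.IsLeftToRightMax x <;> by_cases hy : π.IsLeftToRightMax y
    · rw [hmax x hx, hmax y hy]; linarith [hR hlt]
    · rw [hmax x hx, hnonmax y hy]; linarith [hR hlt]
    · rw [hnonmax x hx, hmax y hy]; linarith [hasc x y ⟨hlt, hx, hy, hxy⟩]
    · rw [hnonmax x hx, hnonmax y hy]; exact hR hlt
  · exact absurd hxy (lt_irrefl _)
  · have hy : ¬ π.IsLeftToRightMax y := fun hy => (hy x hgt).asymm hxy
    rw [hmax x (isLeftToRightMax_of_inversion h hxy hgt), hnonmax y hy]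
    linarith [hinv y x hgt (not_spansAscentToMax_of_inversion h hxy)]

end Avoiding

end Equiv.Perm

theorem IsIntervalRep.length_lt_of_inversion {n : ℕ} {π : Equiv.Perm (Fin n)} {ℓ r : Fin n → ℤ}
    (h : IsIntervalRep π ℓ r) {i j : Fin n} (hij : i < j) (hji : π j < π i) :
    r (π j) - ℓ (π j) < r (π i) - ℓ (π i) := by
  linarith [h.1 i j hij, h.2.2 _ _ hji]

theorem exists_intervalRep_card_lengths_le_two {n : ℕ} {π : Equiv.Perm (Fin n)}
    (h : ¬ ∃ i j k : Fin n, i < j ∧ j < k ∧ π j < π i ∧ π k < π j) :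
    ∃ ℓ r : Fin n → ℤ, IsIntervalRep π ℓ r ∧
      (Finset.image (fun j => r j - ℓ j) Finset.univ).card ≤ 2 := by
  classical
  obtain ⟨R, Δ, hΔ, hR, hrep⟩ :=
    exists_isUnitIntervalRep (Q := π.SpansAscentToMax) (fun _ _ _ _ hQ hb ha => hQ.mono hb ha)
      (Finset.univ (α := Fin n))
  rw [Finset.coe_univ, strictMonoOn_univ] at hR
  obtain ⟨B, hB⟩ : ∃ B, ∀ v, |R v| ≤ B :=
    ⟨∑ v, |R v|, fun v => Finset.single_le_sum (fun v _ => abs_nonneg (R v)) (Finset.mem_univ v)⟩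
  set L : Fin n → ℤ := fun v => R v - if π.IsLeftToRightMax v then Δ else 0
  refine ⟨fun v => L v - (2 * B + 1), R, ⟨fun i j hij => ?_, fun i j => ?_, fun _ _ => (hR ·)⟩, ?_⟩
  · refine sub_lt_sub_right (Equiv.Perm.leftEndpoint_lt_of_symm_lt h hR hΔ.le
      (fun v hv => by simp [L, hv]) (fun v hv => by simp [L, hv])
      (fun c d hcd => (hrep c (by simp) d (by simp) hcd.1).1 ⟨c, d, hcd, le_rfl, le_rfl⟩)
      (fun y x hyx hQ => (hrep y (by simp) x (by simp) hyx).2 hQ) (by simpa using hij)) _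
  · have := abs_le.1 (hB i); have := abs_le.1 (hB j)
    simp only [L]; split_ifs <;> linarith
  · refine (Finset.card_le_card fun x hx => ?_).trans
      (Finset.card_le_two (a := 2 * B + 1) (b := 2 * B + 1 + Δ))
    obtain ⟨v, -, rfl⟩ := Finset.mem_image.1 hx
    simp only [L, Finset.mem_insert, Finset.mem_singleton]
    by_cases hv : π.IsLeftToRightMax v
    · right; rw [if_pos hv]; ring
    · left; rw [if_neg hv]; ring

/-- A permutation of `{1,…,n}` admits an interval representation using at most
2 distinct interval lengths iff it has no strictly decreasing subsequence of
length 3. -/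
theorem two_count_iff_depth_le_two (n : ℕ) (π : Equiv.Perm (Fin n)) :
    (∃ ℓ r : Fin n → ℤ, IsIntervalRep π ℓ r ∧
      (Finset.image (fun j => r j - ℓ j) Finset.univ).card ≤ 2) ↔
    ¬ ∃ i j k : Fin n, i < j ∧ j < k ∧ π j < π i ∧ π k < π j := by
  refine ⟨?_, exists_intervalRep_card_lengths_le_two⟩
  rintro ⟨ℓ, r, hrep, hcard⟩ ⟨i, j, k, hij, hjk, hji, hkj⟩
  have hkj' := hrep.length_lt_of_inversion hjk hkj
  have hji' := hrep.length_lt_of_inversion hij hji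
  have hmem (v : Fin n) : r v - ℓ v ∈ Finset.image (fun j => r j - ℓ j) Finset.univ :=
    Finset.mem_image_of_mem _ (Finset.mem_univ v)
  exact hcard.not_gt (Finset.two_lt_card.2 ⟨_, hmem (π k), _, hmem (π j), _, hmem (π i),
    hkj'.ne, (hkj'.trans hji').ne, hji'.ne⟩)
end

section
/- If a permutation π of {1,…,n} has a strictly decreasing subsequence of length k, then every interval representation of π uses at least k distinct interval lengths, i.e., the set {r_j − ℓ_j : 1 ≤ j ≤ n} has at least k elements. -/
namespace IsIntervalRep

variable {n : ℕ} {π : Equiv.Perm (Fin n)} {ℓ r : Fin n → ℤ}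

theorem length_lt_of_inversion_s1 (hrep : IsIntervalRep π ℓ r) {a b : Fin n} (hab : a < b)
    (hπ : π b < π a) : r (π b) - ℓ (π b) < r (π a) - ℓ (π a) := by
  have hℓ := hrep.1 a b hab
  have hr := hrep.2.2 _ _ hπ
  omega

theorem strictAnti_length_comp {ι : Type*} [Preorder ι] (hrep : IsIntervalRep π ℓ r)
    {f : ι → Fin n} (hf : StrictMono f) (hdec : StrictAnti (fun i => π (f i))) :
    StrictAnti (fun i => r (π (f i)) - ℓ (π (f i))) :=
  fun _ _ hij => hrep.length_lt_of_inversion_s1 (hf hij) (hdec hij)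

end IsIntervalRep

/-- If a permutation has a strictly decreasing subsequence of length `k`, then
every interval representation of it uses at least `k` distinct interval lengths. -/
theorem decreasing_subsequence_forces_lengths (n k : ℕ) (π : Equiv.Perm (Fin n))
    (f : Fin k → Fin n) (hf : StrictMono f)
    (hdec : ∀ i j : Fin k, i < j → π (f j) < π (f i))
    (ℓ r : Fin n → ℤ) (hrep : IsIntervalRep π ℓ r) :
    k ≤ (Finset.image (fun j => r j - ℓ j) Finset.univ).card := by
  have hlen := hrep.strictAnti_length_comp hf (fun _ _ => hdec _ _)
  calc k = (Finset.univ : Finset (Fin k)).card := (Finset.card_fin k).symm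
    _ ≤ _ := Finset.card_le_card_of_injOn _
        (fun i _ => Finset.mem_image_of_mem _ (Finset.mem_univ (π (f i))))
        hlen.injective.injOn
end

section
/- If a permutation π of {1,…,n} has no strictly decreasing subsequence of length 3, then every sorted 2-coloring (S, T) of π is feasible: there exist integers α < β and an interval representation [ℓ_j, r_j] (1 ≤ j ≤ n) of π such that r_j − ℓ_j = α for every j ∈ S and r_j − ℓ_j = β for every j ∈ T. -/
/-!
Put `ℓ v = L (π⁻¹ v)` and give the intervals of `S` length `A`, those of `T` length `A + D`.
Since `S` and `T` each occur in increasing order in `π`, the right endpoints are ordered as soon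
as `L (π⁻¹ s) > L (π⁻¹ t) + D` for `t ∈ T` below `s ∈ S` and `L (π⁻¹ s) < L (π⁻¹ t) + D` for
`s ∈ S` below `t ∈ T`. Both hold if, for each `t ∈ T`, `L` exceeds `L (π⁻¹ t) + D` exactly from
the position of the least element of `S` above `t` on (from `n` if there is none); these
threshold positions increase along `T`.

Threshold constraints of this kind are met by the longest-path potential of a left-to-right scan
that adds `2 ^ (N - i)` at step `i` and jumps by `D = 2 ^ (N + 1)` from each source to its
threshold. A jump landing below the threshold of a later source `k` starts at a source `k' < k`,
and the step leaving `k'` outweighs all later steps, so the jump stays below `L k + D`.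
-/

namespace ThresholdScan

variable {ι : Type*} (s : Finset ι) (a b : ι → ℕ) (N : ℕ)

def scan : ℕ → ℕ
  | 0 => 0
  | i + 1 => max (scan i) ((s.filter fun t => a t ≤ i ∧ b t ≤ i + 1).attach.sup
      fun t => scan (a t.1) + 2 ^ (N + 1)) + 2 ^ (N - i)
decreasing_by
  · omega
  · have := (Finset.mem_filter.mp t.2).2.1; omega

theorem scan_succ (i : ℕ) :
    scan s a b N (i + 1) = max (scan s a b N i) ((s.filter fun t => a t ≤ i ∧ b t ≤ i + 1).attach.sup
      fun t => scan s a b N (a t.1) + 2 ^ (N + 1)) + 2 ^ (N - i) := by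
  rw [scan]

theorem scan_add_le_scan_succ (i : ℕ) : scan s a b N i + 2 ^ (N - i) ≤ scan s a b N (i + 1) := by
  rw [scan_succ]
  exact Nat.add_le_add_right (le_max_left _ _) _

theorem scan_strictMono : StrictMono (scan s a b N) :=
  strictMono_nat_of_lt_succ fun i =>
    (Nat.lt_add_of_pos_right (Nat.two_pow_pos _)).trans_le (scan_add_le_scan_succ s a b N i)

variable {s a b}

theorem scan_add_lt_scan {t : ι} (ht : t ∈ s) (hab : a t < b t) :
    scan s a b N (a t) + 2 ^ (N + 1) < scan s a b N (b t) := by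
  obtain ⟨i, hi⟩ : ∃ i, b t = i + 1 := Nat.exists_eq_succ_of_ne_zero (by omega)
  have hmem : t ∈ s.filter fun t => a t ≤ i ∧ b t ≤ i + 1 :=
    Finset.mem_filter.mpr ⟨ht, by omega, hi.le⟩
  have hle := Finset.le_sup (f := fun t : {x // x ∈ s.filter fun t => a t ≤ i ∧ b t ≤ i + 1} =>
    scan s a b N (a t.1) + 2 ^ (N + 1)) (Finset.mem_attach _ ⟨t, hmem⟩)
  rw [hi, scan_succ]
  have := Nat.two_pow_pos (N - i)
  simp only at hle
  omega

theorem scan_add_two_mul_le_scan_add {t : ι} (hmono : ∀ t' ∈ s, a t ≤ a t' → b t ≤ b t')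
    {p : ℕ} (htp : a t ≤ p) (hpN : p ≤ N) (hpb : p < b t) :
    scan s a b N p + 2 * 2 ^ (N - p) ≤ scan s a b N (a t) + 2 ^ (N + 1) := by
  induction p, htp using Nat.le_induction with
  | base =>
    rw [← pow_succ']
    exact Nat.add_le_add_left (Nat.pow_le_pow_right two_pos (by omega)) _
  | succ p htp ih =>
    have ih := ih (by omega) (by omega)
    have hpow : 2 * 2 ^ (N - (p + 1)) = 2 ^ (N - p) := by
      rw [← pow_succ']; congr 1; omega
    have hjump : ∀ t' ∈ s.filter fun t => a t ≤ p ∧ b t ≤ p + 1,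
        scan s a b N (a t') + 2 ^ (N + 1) + 2 * 2 ^ (N - p) ≤ scan s a b N (a t) + 2 ^ (N + 1) := by
      intro t' ht'
      obtain ⟨ht's, -, hbt'⟩ := Finset.mem_filter.mp ht'
      have hat' : a t' < a t := by
        by_contra! h
        exact absurd (hmono t' ht's h) (by omega)
      have hstep := scan_add_le_scan_succ s a b N (a t')
      have hscan := (scan_strictMono s a b N).monotone (show a t' + 1 ≤ a t by omega)
      have hpow' : 2 * 2 ^ (N - p) ≤ 2 ^ (N - a t') := by
        rw [← pow_succ']; exact Nat.pow_le_pow_right two_pos (by omega)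
      omega
    have hsup : ((s.filter fun t => a t ≤ p ∧ b t ≤ p + 1).attach.sup
        fun t => scan s a b N (a t.1) + 2 ^ (N + 1)) ≤
          scan s a b N (a t) + 2 ^ (N + 1) - 2 * 2 ^ (N - p) :=
      Finset.sup_le fun t' _ => Nat.le_sub_of_add_le (hjump t'.1 t'.2)
    rw [scan_succ, hpow]
    omega

end ThresholdScan

open ThresholdScan in
theorem exists_strictMono_threshold_separated {ι : Type*} (s : Finset ι) (a b : ι → ℕ) (N : ℕ)
    (hab : ∀ t ∈ s, a t < b t) (hmono : ∀ t ∈ s, ∀ t' ∈ s, a t ≤ a t' → b t ≤ b t') :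
    ∃ (L : ℕ → ℤ) (D : ℤ), StrictMono L ∧ 0 < D ∧
      ∀ t ∈ s, L (a t) + D < L (b t) ∧ ∀ j ≤ N, j < b t → L j < L (a t) + D := by
  have hL := scan_strictMono s a b N
  refine ⟨fun i => scan s a b N i, (2 ^ (N + 1) : ℕ), Nat.strictMono_cast.comp hL, by positivity,
    fun t ht => ⟨by dsimp only; exact_mod_cast scan_add_lt_scan N ht (hab t ht), fun j hjN hjb => ?_⟩⟩
  suffices scan s a b N j < scan s a b N (a t) + 2 ^ (N + 1) by dsimp only; exact_mod_cast this
  rcases lt_or_ge j (a t) with hja | hja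
  · exact (hL hja).trans_le (Nat.le_add_right _ _)
  · have := scan_add_two_mul_le_scan_add N (hmono t ht) hja hjN hjb
    have := Nat.two_pow_pos (N - j)
    omega

section SortedColoring

variable {n : ℕ} {π : Equiv.Perm (Fin n)} {S T : Finset (Fin n)}

theorem symm_lt_symm_of_sorted (hdisj : Disjoint S T)
    (hsorted : ∀ x y : Fin n, x < y → π.symm y < π.symm x → x ∈ S ∧ y ∈ T)
    {x y : Fin n} (hxy : x < y) (h : y ∈ S ∨ x ∈ T) : π.symm x < π.symm y := by
  by_contra! hle
  obtain ⟨hx, hy⟩ := hsorted x y hxy (hle.lt_of_ne (π.symm.injective.ne hxy.ne'))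
  rcases h with h | h
  · exact Finset.disjoint_left.mp hdisj h hy
  · exact Finset.disjoint_left.mp hdisj hx h

theorem le_of_symm_le_of_sorted (hdisj : Disjoint S T)
    (hsorted : ∀ x y : Fin n, x < y → π.symm y < π.symm x → x ∈ S ∧ y ∈ T)
    {t t' : Fin n} (ht' : t' ∈ T) (h : π.symm t ≤ π.symm t') : t ≤ t' :=
  not_lt.mp fun hlt => (symm_lt_symm_of_sorted hdisj hsorted hlt (Or.inr ht')).not_ge h

variable (π S) in
def minPosAbove (t : Fin n) : ℕ :=
  (insert n ((S.filter (t < ·)).image fun s => (π.symm s : ℕ))).min' (Finset.insert_nonempty _ _)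

theorem minPosAbove_le {s t : Fin n} (hs : s ∈ S) (hts : t < s) :
    minPosAbove π S t ≤ π.symm s :=
  Finset.min'_le _ _ (Finset.mem_insert_of_mem
    (Finset.mem_image_of_mem _ (Finset.mem_filter.mpr ⟨hs, hts⟩)))

theorem minPosAbove_mono {t t' : Fin n} (h : t ≤ t') : minPosAbove π S t ≤ minPosAbove π S t' :=
  Finset.min'_subset _ (Finset.insert_subset_insert _ (Finset.image_subset_image
    (Finset.monotone_filter_right _ fun _ _ hlt => h.trans_lt hlt)))

theorem symm_lt_minPosAbove (hdisj : Disjoint S T)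
    (hsorted : ∀ x y : Fin n, x < y → π.symm y < π.symm x → x ∈ S ∧ y ∈ T)
    {x t : Fin n} (hxt : x ≤ t) : (π.symm x : ℕ) < minPosAbove π S t := by
  rcases Finset.mem_insert.mp (Finset.min'_mem _ (Finset.insert_nonempty n
      ((S.filter (t < ·)).image fun s => (π.symm s : ℕ)))) with h | h
  · rw [minPosAbove, h]
    exact (π.symm x).isLt
  · obtain ⟨s, hs, hs_eq⟩ := Finset.mem_image.mp h
    obtain ⟨hsS, hts⟩ := Finset.mem_filter.mp hs
    rw [minPosAbove, ← hs_eq]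
    exact symm_lt_symm_of_sorted hdisj hsorted (hxt.trans_lt hts) (Or.inl hsS)

theorem exists_intervalRep_of_separated (hunion : S ∪ T = Finset.univ) (hdisj : Disjoint S T)
    (hsorted : ∀ x y : Fin n, x < y → π.symm y < π.symm x → x ∈ S ∧ y ∈ T)
    (L : ℕ → ℤ) (D : ℤ) (hL : StrictMono L) (hD : 0 < D)
    (hfar : ∀ t ∈ T, ∀ s ∈ S, t < s → L (π.symm t) + D < L (π.symm s))
    (hnear : ∀ s ∈ S, ∀ t ∈ T, s < t → L (π.symm s) < L (π.symm t) + D) :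
    ∃ (α β : ℤ) (ℓ r : Fin n → ℤ), α < β ∧ IsIntervalRep π ℓ r ∧
      (∀ j ∈ S, r j - ℓ j = α) ∧ (∀ j ∈ T, r j - ℓ j = β) := by
  have hST : ∀ v, v ∈ S ∨ v ∈ T := fun v => Finset.mem_union.mp (hunion ▸ Finset.mem_univ v)
  have hnotS : ∀ v ∈ T, v ∉ S := fun v hvT hvS => Finset.disjoint_left.mp hdisj hvS hvT
  set A := L n - L 0 + 1
  refine ⟨A, A + D, fun v => L (π.symm v), fun v => L (π.symm v) + if v ∈ S then A else A + D,
    by omega, ⟨fun i j hij => by simpa using hL hij, fun i j => ?_, fun u v huv => ?_⟩,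
    fun j hj => by simp [hj], fun j hj => by simp [hnotS j hj]⟩
  · dsimp only
    have := hL (π.symm i).isLt
    have := hL.monotone (Nat.zero_le (π.symm j))
    split_ifs <;> omega
  · dsimp only
    rcases hST u with hu | hu <;> rcases hST v with hv | hv
    · have := hL (symm_lt_symm_of_sorted hdisj hsorted huv (Or.inl hv))
      simp only [hu, hv, if_true]
      omega
    · have := hnear u hu v hv huv
      simp only [hu, hnotS v hv, if_true, if_false]
      omega
    · have := hfar u hu v hv huv
      simp only [hnotS u hu, hv, if_true, if_false]
      omega
    · have := hL (symm_lt_symm_of_sorted hdisj hsorted huv (Or.inr hu))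
      simp only [hnotS u hu, hnotS v hv, if_false]
      omega

end SortedColoring

theorem sorted_two_coloring_feasible_general (n : ℕ) (π : Equiv.Perm (Fin n))
    (S T : Finset (Fin n)) (hunion : S ∪ T = Finset.univ) (hdisj : Disjoint S T)
    (hsorted : ∀ x y : Fin n, x < y → π.symm y < π.symm x → x ∈ S ∧ y ∈ T) :
    ∃ (α β : ℤ) (ℓ r : Fin n → ℤ), α < β ∧ IsIntervalRep π ℓ r ∧
      (∀ j ∈ S, r j - ℓ j = α) ∧ (∀ j ∈ T, r j - ℓ j = β) := by
  obtain ⟨L, D, hL, hD, hsep⟩ := exists_strictMono_threshold_separated T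
    (fun t => (π.symm t : ℕ)) (minPosAbove π S) n
    (fun t _ => symm_lt_minPosAbove hdisj hsorted le_rfl)
    (fun _ _ _ ht' h => minPosAbove_mono (le_of_symm_le_of_sorted hdisj hsorted ht' h))
  refine exists_intervalRep_of_separated hunion hdisj hsorted L D hL hD ?_ ?_
  · intro t ht s hs hts
    exact (hsep t ht).1.trans_le (hL.monotone (minPosAbove_le hs hts))
  · intro s hs t ht hst
    exact (hsep t ht).2 _ (π.symm s).isLt.le (symm_lt_minPosAbove hdisj hsorted hst.le)

/-- If a permutation `π` of `{1,…,n}` has no strictly decreasing subsequence of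
length 3, then every sorted 2-coloring `(S, T)` of `π` is feasible: there exist
integers `α < β` and an interval representation of `π` in which every interval
indexed by `S` has length `α` and every interval indexed by `T` has length `β`. -/
theorem sorted_two_coloring_feasible (n : ℕ) (π : Equiv.Perm (Fin n))
    (hdepth : ¬ ∃ i j k : Fin n, i < j ∧ j < k ∧ π j < π i ∧ π k < π j)
    (S T : Finset (Fin n)) (hunion : S ∪ T = Finset.univ) (hdisj : Disjoint S T)
    (hsorted : ∀ x y : Fin n, x < y → π.symm y < π.symm x → x ∈ S ∧ y ∈ T) :
    ∃ (α β : ℤ) (ℓ r : Fin n → ℤ), α < β ∧ IsIntervalRep π ℓ r ∧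
      (∀ j ∈ S, r j - ℓ j = α) ∧ (∀ j ∈ T, r j - ℓ j = β) :=
  sorted_two_coloring_feasible_general n π S T hunion hdisj hsorted
end

section
/- Let (ℓ, r) be an interval representation of a permutation π of {1,…,n} and let (S, T) be a sorted 2-coloring of π. Suppose rational numbers α < β satisfy: (i) for every 1 ≤ i < n with π(i) ∈ T and π(i+1) ∈ S, r_{π(i)} − r_{π(i+1)} < β − α; (ii) for every 1 ≤ i < n with π(i) ∈ S and π(i+1) ∈ T, β − α < r_{π(i+1)} − r_{π(i)}; (iii) α > r_{π(n)} − r_1 in case π(n) ∈ S, and β > r_{π(n)} − r_1 in case π(n) ∈ T. Define ℓ'_x = r_x − α for x ∈ S and ℓ'_x = r_x − β for x ∈ T. Then ℓ'_{π(1)} < ℓ'_{π(2)} < ⋯ < ℓ'_{π(n)} < r_1 < r_2 < ⋯ < r_n; consequently the intervals [ℓ'_x, r_x] form an interval representation of π (with rational endpoints) using only the two lengths α and β. -/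
theorem Fin.strictMono_of_lt_add_one {α : Type*} [Preorder α] {n : ℕ} {f : Fin n → α}
    (h : ∀ (i : ℕ) (h : i + 1 < n), f ⟨i, Nat.lt_of_succ_lt h⟩ < f ⟨i + 1, h⟩) :
    StrictMono f := by
  cases n with
  | zero => exact fun i => i.elim0
  | succ m => exact Fin.strictMono_iff_lt_succ.mpr fun i => h i (Nat.succ_lt_succ i.isLt)

section SortedColoring

variable {V P : Type*} [LinearOrder V] [LinearOrder P] {pos : V → P} {S T : Finset V}

theorem lt_of_pos_lt_of_mem_left (hdisj : Disjoint S T)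
    (hsorted : ∀ x y, x < y → pos y < pos x → x ∈ S ∧ y ∈ T)
    {x y : V} (hxy : pos x < pos y) (hx : x ∈ S) : x < y :=
  lt_of_not_ge fun hyx =>
    Finset.disjoint_left.mp hdisj hx
      (hsorted y x (hyx.lt_of_ne fun h => hxy.ne (congrArg pos h).symm) hxy).2

theorem lt_of_pos_lt_of_mem_right (hdisj : Disjoint S T)
    (hsorted : ∀ x y, x < y → pos y < pos x → x ∈ S ∧ y ∈ T)
    {x y : V} (hxy : pos x < pos y) (hy : y ∈ T) : x < y :=
  lt_of_not_ge fun hyx =>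
    Finset.disjoint_left.mp hdisj
      (hsorted y x (hyx.lt_of_ne fun h => hxy.ne (congrArg pos h).symm) hxy).1 hy

theorem adjusted_endpoint_lt {K : Type*} [Field K] [LinearOrder K] [IsStrictOrderedRing K]
    (hdisj : Disjoint S T) (hsorted : ∀ x y, x < y → pos y < pos x → x ∈ S ∧ y ∈ T)
    (hcover : ∀ x, x ∈ S ∨ x ∈ T) {r : V → K} (hr : StrictMono r) {a b : K} {ℓ' : V → K}
    (hℓ' : ∀ x, (x ∈ S → ℓ' x = r x - a) ∧ (x ∈ T → ℓ' x = r x - b))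
    {x y : V} (hxy : pos x < pos y)
    (hTS : x ∈ T → y ∈ S → r x - r y < b - a) (hST : x ∈ S → y ∈ T → b - a < r y - r x) :
    ℓ' x < ℓ' y := by
  rcases hcover x with hx | hx <;> rcases hcover y with hy | hy
  · have := hr (lt_of_pos_lt_of_mem_left hdisj hsorted hxy hx)
    rw [(hℓ' x).1 hx, (hℓ' y).1 hy]
    linarith
  · rw [(hℓ' x).1 hx, (hℓ' y).2 hy]
    linarith [hST hx hy]
  · rw [(hℓ' x).2 hx, (hℓ' y).1 hy]
    linarith [hTS hx hy]
  · have := hr (lt_of_pos_lt_of_mem_right hdisj hsorted hxy hy)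
    rw [(hℓ' x).2 hx, (hℓ' y).2 hy]
    linarith

end SortedColoring

theorem adjusted_endpoints_give_two_count_general (n : ℕ) (hn : 0 < n)
    (π : Equiv.Perm (Fin n)) (ℓ r : Fin n → ℤ) (hrep : IsIntervalRep π ℓ r)
    (S T : Finset (Fin n)) (hunion : S ∪ T = Finset.univ) (hdisj : Disjoint S T)
    (hsorted : ∀ x y : Fin n, x < y → π.symm y < π.symm x → x ∈ S ∧ y ∈ T)
    (α β : ℚ)
    (hTS : ∀ (i : ℕ) (h : i + 1 < n),
      π ⟨i, Nat.lt_of_succ_lt h⟩ ∈ T → π ⟨i + 1, h⟩ ∈ S →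
        (r (π ⟨i, Nat.lt_of_succ_lt h⟩) : ℚ) - (r (π ⟨i + 1, h⟩) : ℚ) < β - α)
    (hST : ∀ (i : ℕ) (h : i + 1 < n),
      π ⟨i, Nat.lt_of_succ_lt h⟩ ∈ S → π ⟨i + 1, h⟩ ∈ T →
        β - α < (r (π ⟨i + 1, h⟩) : ℚ) - (r (π ⟨i, Nat.lt_of_succ_lt h⟩) : ℚ))
    (hlastS : π ⟨n - 1, Nat.sub_lt hn Nat.one_pos⟩ ∈ S →
      (r (π ⟨n - 1, Nat.sub_lt hn Nat.one_pos⟩) : ℚ) - (r ⟨0, hn⟩ : ℚ) < α)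
    (hlastT : π ⟨n - 1, Nat.sub_lt hn Nat.one_pos⟩ ∈ T →
      (r (π ⟨n - 1, Nat.sub_lt hn Nat.one_pos⟩) : ℚ) - (r ⟨0, hn⟩ : ℚ) < β)
    (ℓ' : Fin n → ℚ)
    (hℓ' : ∀ x : Fin n, (x ∈ S → ℓ' x = (r x : ℚ) - α) ∧
      (x ∈ T → ℓ' x = (r x : ℚ) - β)) :
    (∀ i j : Fin n, i < j → ℓ' (π i) < ℓ' (π j)) ∧
    (∀ i j : Fin n, ℓ' i < (r j : ℚ)) ∧
    (∀ i j : Fin n, i < j → (r i : ℚ) < (r j : ℚ)) ∧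
    (∀ x : Fin n, (r x : ℚ) - ℓ' x = α ∨ (r x : ℚ) - ℓ' x = β) := by
  have hr : StrictMono fun x => (r x : ℚ) := fun i j hij => Int.cast_lt.mpr (hrep.2.2 i j hij)
  have hcover : ∀ x, x ∈ S ∨ x ∈ T := fun x =>
    Finset.mem_union.mp (hunion ▸ Finset.mem_univ x)
  have hℓ'π : StrictMono (ℓ' ∘ π) := Fin.strictMono_of_lt_add_one fun i h =>
    adjusted_endpoint_lt hdisj hsorted hcover hr hℓ' (by simp) (hTS i h) (hST i h)
  set last : Fin n := ⟨n - 1, Nat.sub_lt hn Nat.one_pos⟩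
  have hlast : ℓ' (π last) < r ⟨0, hn⟩ := by
    rcases hcover (π last) with h | h
    · rw [(hℓ' _).1 h]; linarith [hlastS h]
    · rw [(hℓ' _).2 h]; linarith [hlastT h]
  refine ⟨fun i j hij => hℓ'π hij, fun i j => ?_, fun i j hij => hr hij, fun x => ?_⟩
  · calc ℓ' i = ℓ' (π (π.symm i)) := by rw [Equiv.apply_symm_apply]
      _ ≤ ℓ' (π last) := hℓ'π.monotone (Fin.le_def.mpr (Nat.le_sub_one_of_lt (π.symm i).isLt))
      _ < r ⟨0, hn⟩ := hlast
      _ ≤ r j := hr.monotone (Fin.le_def.mpr (Nat.zero_le _))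
  · rcases hcover x with h | h
    · exact .inl (by rw [(hℓ' x).1 h]; ring)
    · exact .inr (by rw [(hℓ' x).2 h]; ring)

/-- Given an interval representation `(ℓ, r)` of `π`, a sorted 2-coloring
`(S, T)` and rationals `α < β` dominating all TS-slacks, dominated by all
ST-slacks, and with the appropriate one of `α`, `β` exceeding
`r (π n) - r 1`, the modified left endpoints `ℓ' x = r x - α` (for `x ∈ S`)
and `ℓ' x = r x - β` (for `x ∈ T`) yield an interval representation of `π`
with rational endpoints, using only the lengths `α` and `β`. -/
theorem adjusted_endpoints_give_two_count (n : ℕ) (hn : 0 < n)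
    (π : Equiv.Perm (Fin n)) (ℓ r : Fin n → ℤ) (hrep : IsIntervalRep π ℓ r)
    (S T : Finset (Fin n)) (hunion : S ∪ T = Finset.univ) (hdisj : Disjoint S T)
    (hsorted : ∀ x y : Fin n, x < y → π.symm y < π.symm x → x ∈ S ∧ y ∈ T)
    (α β : ℚ) (hαβ : α < β)
    (hTS : ∀ (i : ℕ) (h : i + 1 < n),
      π ⟨i, Nat.lt_of_succ_lt h⟩ ∈ T → π ⟨i + 1, h⟩ ∈ S →
        (r (π ⟨i, Nat.lt_of_succ_lt h⟩) : ℚ) - (r (π ⟨i + 1, h⟩) : ℚ) < β - α)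
    (hST : ∀ (i : ℕ) (h : i + 1 < n),
      π ⟨i, Nat.lt_of_succ_lt h⟩ ∈ S → π ⟨i + 1, h⟩ ∈ T →
        β - α < (r (π ⟨i + 1, h⟩) : ℚ) - (r (π ⟨i, Nat.lt_of_succ_lt h⟩) : ℚ))
    (hlastS : π ⟨n - 1, Nat.sub_lt hn Nat.one_pos⟩ ∈ S →
      (r (π ⟨n - 1, Nat.sub_lt hn Nat.one_pos⟩) : ℚ) - (r ⟨0, hn⟩ : ℚ) < α)
    (hlastT : π ⟨n - 1, Nat.sub_lt hn Nat.one_pos⟩ ∈ T →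
      (r (π ⟨n - 1, Nat.sub_lt hn Nat.one_pos⟩) : ℚ) - (r ⟨0, hn⟩ : ℚ) < β)
    (ℓ' : Fin n → ℚ)
    (hℓ' : ∀ x : Fin n, (x ∈ S → ℓ' x = (r x : ℚ) - α) ∧
      (x ∈ T → ℓ' x = (r x : ℚ) - β)) :
    (∀ i j : Fin n, i < j → ℓ' (π i) < ℓ' (π j)) ∧
    (∀ i j : Fin n, ℓ' i < (r j : ℚ)) ∧
    (∀ i j : Fin n, i < j → (r i : ℚ) < (r j : ℚ)) ∧
    (∀ x : Fin n, (r x : ℚ) - ℓ' x = α ∨ (r x : ℚ) - ℓ' x = β) :=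
  adjusted_endpoints_give_two_count_general n hn π ℓ r hrep S T hunion hdisj hsorted α β hTS hST
    hlastS hlastT ℓ' hℓ'
end

section
/- Let (ℓ, r) be an interval representation of a permutation π of {1,…,n}, let (S, T) be a partition of {1,…,n}, and let α < β be integers with r_j − ℓ_j = α for all j ∈ S and r_j − ℓ_j = β for all j ∈ T. Then for every 1 ≤ i < n: if π(i) ∈ T and π(i+1) ∈ S, then r_{π(i)} − r_{π(i+1)} < β − α; and if π(i) ∈ S and π(i+1) ∈ T, then β − α < r_{π(i+1)} − r_{π(i)}. In particular, every TS-slack value is strictly smaller than every ST-slack value. -/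
/-!
The interval of `π (i+1)` starts strictly after that of `π i`, so comparing right endpoints
differs from comparing lengths by the positive amount `ℓ (π (i+1)) - ℓ (π i)`; with lengths
`β` on `T` and `α` on `S` this gives both bounds at once.
-/

section IntervalEndpoints

variable {G : Type*} [AddCommGroup G] [LinearOrder G] [IsOrderedAddMonoid G] {a b c d : G}

theorem sub_lt_sub_sub_sub_of_lt (h : a < b) : c - d < (c - a) - (d - b) := by
  rw [sub_sub_sub_comm]
  exact lt_sub_right_of_add_lt (add_lt_of_neg_right _ (sub_neg.2 h))

theorem sub_sub_sub_lt_sub_of_lt (h : a < b) : (d - b) - (c - a) < d - c := by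
  simpa only [neg_sub] using neg_lt_neg (sub_lt_sub_sub_sub_of_lt (c := c) (d := d) h)

end IntervalEndpoints

theorem IsIntervalRep.left_strictMono {n : ℕ} {π : Equiv.Perm (Fin n)} {ℓ r : Fin n → ℤ}
    (hrep : IsIntervalRep π ℓ r) : StrictMono (ℓ ∘ π) :=
  fun i j hij => hrep.1 i j hij

theorem slack_bounds_of_two_count_general (n : ℕ) (π : Equiv.Perm (Fin n))
    (ℓ r : Fin n → ℤ) (hrep : IsIntervalRep π ℓ r)
    (S T : Finset (Fin n))
    (α β : ℤ)
    (hS : ∀ j ∈ S, r j - ℓ j = α) (hT : ∀ j ∈ T, r j - ℓ j = β) :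
    ∀ (i : ℕ) (h : i + 1 < n),
      (π ⟨i, Nat.lt_of_succ_lt h⟩ ∈ T → π ⟨i + 1, h⟩ ∈ S →
        r (π ⟨i, Nat.lt_of_succ_lt h⟩) - r (π ⟨i + 1, h⟩) < β - α) ∧
      (π ⟨i, Nat.lt_of_succ_lt h⟩ ∈ S → π ⟨i + 1, h⟩ ∈ T →
        β - α < r (π ⟨i + 1, h⟩) - r (π ⟨i, Nat.lt_of_succ_lt h⟩)) := by
  intro i h
  have hℓ : ℓ (π ⟨i, Nat.lt_of_succ_lt h⟩) < ℓ (π ⟨i + 1, h⟩) :=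
    hrep.left_strictMono (Fin.mk_lt_mk.2 i.lt_succ_self)
  refine ⟨fun hiT hiS => ?_, fun hiS hiT => ?_⟩
  · rw [← hT _ hiT, ← hS _ hiS]
    exact sub_lt_sub_sub_sub_of_lt hℓ
  · rw [← hS _ hiS, ← hT _ hiT]
    exact sub_sub_sub_lt_sub_of_lt hℓ

/-- In a 2-count interval representation of `π` with lengths `α` on `S` and
`β` on `T` (`α < β`), every TS-slack `r (π i) - r (π (i+1))` is strictly
smaller than `β - α`, and `β - α` is strictly smaller than every ST-slack
`r (π (i+1)) - r (π i)`.  In particular every TS-slack is strictly smaller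
than every ST-slack. -/
theorem slack_bounds_of_two_count (n : ℕ) (π : Equiv.Perm (Fin n))
    (ℓ r : Fin n → ℤ) (hrep : IsIntervalRep π ℓ r)
    (S T : Finset (Fin n)) (hunion : S ∪ T = Finset.univ) (hdisj : Disjoint S T)
    (α β : ℤ) (hαβ : α < β)
    (hS : ∀ j ∈ S, r j - ℓ j = α) (hT : ∀ j ∈ T, r j - ℓ j = β) :
    ∀ (i : ℕ) (h : i + 1 < n),
      (π ⟨i, Nat.lt_of_succ_lt h⟩ ∈ T → π ⟨i + 1, h⟩ ∈ S →
        r (π ⟨i, Nat.lt_of_succ_lt h⟩) - r (π ⟨i + 1, h⟩) < β - α) ∧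
      (π ⟨i, Nat.lt_of_succ_lt h⟩ ∈ S → π ⟨i + 1, h⟩ ∈ T →
        β - α < r (π ⟨i + 1, h⟩) - r (π ⟨i, Nat.lt_of_succ_lt h⟩)) :=
  slack_bounds_of_two_count_general n π ℓ r hrep S T α β hS hT
end

section
/- Let (ℓ, r) be an interval representation of a permutation π of {1,…,n} and (S, T) a sorted 2-coloring of π, and let J_1, J_2 be two distinct slack intervals of this representation. Then: (i) if J_1 ⊊ J_2, then J_1 is a TS-slack interval, J_2 is an ST-slack interval, and J_1 and J_2 have a common left endpoint or a common right endpoint; (ii) if neither of J_1, J_2 contains the other, then J_1 and J_2 share no common endpoint. -/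
/-- `[a, b]` is a TS-slack interval: for some `i` with `π(i) ∈ T`,
`π(i+1) ∈ S` and `r (π (i+1)) < r (π i)`, it is `[r (π (i+1)), r (π i)]`. -/
def IsTSSlack {n : ℕ} (π : Equiv.Perm (Fin n)) (r : Fin n → ℤ)
    (S T : Finset (Fin n)) (a b : ℤ) : Prop :=
  ∃ (i : ℕ) (h : i + 1 < n),
    π ⟨i, Nat.lt_of_succ_lt h⟩ ∈ T ∧ π ⟨i + 1, h⟩ ∈ S ∧
    a = r (π ⟨i + 1, h⟩) ∧ b = r (π ⟨i, Nat.lt_of_succ_lt h⟩) ∧ a < b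

/-- `[a, b]` is an ST-slack interval: for some `i` with `π(i) ∈ S` and
`π(i+1) ∈ T`, it is `[r (π i), r (π (i+1))]` (here `r (π i) < r (π (i+1))`
holds because the coloring is sorted). -/
def IsSTSlack {n : ℕ} (π : Equiv.Perm (Fin n)) (r : Fin n → ℤ)
    (S T : Finset (Fin n)) (a b : ℤ) : Prop :=
  ∃ (i : ℕ) (h : i + 1 < n),
    π ⟨i, Nat.lt_of_succ_lt h⟩ ∈ S ∧ π ⟨i + 1, h⟩ ∈ T ∧
    a = r (π ⟨i, Nat.lt_of_succ_lt h⟩) ∧ b = r (π ⟨i + 1, h⟩) ∧ a < b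

open Set

theorem IsIntervalRep.strictMono_right {n : ℕ} {π : Equiv.Perm (Fin n)} {ℓ r : Fin n → ℤ}
    (h : IsIntervalRep π ℓ r) : StrictMono r :=
  fun i j => h.2.2 i j

section SlackPairs

variable {n : ℕ} {π : Equiv.Perm (Fin n)} {r : Fin n → ℤ} {S T : Finset (Fin n)}

theorem apply_lt_apply_of_sorted (hr : StrictMono r) (hdisj : Disjoint S T)
    (hsorted : ∀ x y : Fin n, x < y → π.symm y < π.symm x → x ∈ S ∧ y ∈ T)
    {u v : Fin n} (huv : u < v) (hmem : π u ∈ S ∨ π v ∈ T) : r (π u) < r (π v) := by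
  by_contra! hle
  have hπ : π v < π u :=
    (hr.le_iff_le.1 hle).lt_of_ne fun h => huv.ne (π.injective h).symm
  obtain ⟨hvS, huT⟩ := hsorted (π v) (π u) hπ (by simpa using huv)
  rcases hmem with huS | hvT
  · exact Finset.disjoint_left.1 hdisj huS huT
  · exact Finset.disjoint_left.1 hdisj hvS hvT

variable (π r S T) in
structure IsSlackPair (p q : Fin n) : Prop where
  adjacent : (p : ℕ) = q + 1 ∨ (q : ℕ) = p + 1
  mem_left : π p ∈ S
  mem_right : π q ∈ T
  lt : r (π p) < r (π q)

theorem isTSSlack_iff {a b : ℤ} :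
    IsTSSlack π r S T a b ↔
      ∃ p q, IsSlackPair π r S T p q ∧ q < p ∧ a = r (π p) ∧ b = r (π q) := by
  constructor
  · rintro ⟨i, hi, hT, hS, rfl, rfl, hlt⟩
    exact ⟨_, _, ⟨.inl rfl, hS, hT, hlt⟩, Fin.mk_lt_mk.2 i.lt_succ_self, rfl, rfl⟩
  · rintro ⟨p, q, ⟨hadj, hS, hT, hlt⟩, hqp, rfl, rfl⟩
    have hp : (q : ℕ) + 1 < n := by omega
    obtain rfl : p = ⟨q + 1, hp⟩ := Fin.ext (show (p : ℕ) = q + 1 by omega)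
    exact ⟨q, hp, hT, hS, rfl, rfl, hlt⟩

theorem isSTSlack_iff {a b : ℤ} :
    IsSTSlack π r S T a b ↔
      ∃ p q, IsSlackPair π r S T p q ∧ p < q ∧ a = r (π p) ∧ b = r (π q) := by
  constructor
  · rintro ⟨i, hi, hS, hT, rfl, rfl, hlt⟩
    exact ⟨_, _, ⟨.inr rfl, hS, hT, hlt⟩, Fin.mk_lt_mk.2 i.lt_succ_self, rfl, rfl⟩
  · rintro ⟨p, q, ⟨hadj, hS, hT, hlt⟩, hpq, rfl, rfl⟩
    have hq : (p : ℕ) + 1 < n := by omega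
    obtain rfl : q = ⟨p + 1, hq⟩ := Fin.ext (show (q : ℕ) = p + 1 by omega)
    exact ⟨p, hq, hS, hT, rfl, rfl, hlt⟩

theorem exists_isSlackPair {a b : ℤ} (h : IsTSSlack π r S T a b ∨ IsSTSlack π r S T a b) :
    ∃ p q, IsSlackPair π r S T p q ∧ a = r (π p) ∧ b = r (π q) := by
  rcases h with h | h
  · obtain ⟨p, q, hpq, -, rfl, rfl⟩ := isTSSlack_iff.1 h
    exact ⟨p, q, hpq, rfl, rfl⟩
  · obtain ⟨p, q, hpq, -, rfl, rfl⟩ := isSTSlack_iff.1 h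
    exact ⟨p, q, hpq, rfl, rfl⟩

theorem IsSlackPair.eq_or_eq_of_Icc_subset (hr : StrictMono r) (hdisj : Disjoint S T)
    (hsorted : ∀ x y : Fin n, x < y → π.symm y < π.symm x → x ∈ S ∧ y ∈ T)
    {p₁ q₁ p₂ q₂ : Fin n} (h₁ : IsSlackPair π r S T p₁ q₁) (h₂ : IsSlackPair π r S T p₂ q₂)
    (hsub : Icc (r (π p₁)) (r (π q₁)) ⊆ Icc (r (π p₂)) (r (π q₂))) :
    p₁ = p₂ ∨ q₁ = q₂ := by
  obtain ⟨ha, hb⟩ := (Icc_subset_Icc_iff h₁.lt.le).1 hsub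
  by_contra! hne
  have hp₁q₂ : p₁ ≠ q₂ := fun h => hdisj.forall_ne_finset h₁.mem_left h₂.mem_right (by rw [h])
  have hq₁p₂ : q₁ ≠ p₂ := fun h => hdisj.forall_ne_finset h₂.mem_left h₁.mem_right (by rw [h])
  -- two disjoint pairs of adjacent positions lie entirely on one side of each other
  have hside : p₁ < p₂ ∨ q₂ < q₁ := by
    have hadj₁ := h₁.adjacent; have hadj₂ := h₂.adjacent
    omega
  rcases hside with hp | hq
  · exact ha.not_gt (apply_lt_apply_of_sorted hr hdisj hsorted hp (.inl h₁.mem_left))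
  · exact hb.not_gt (apply_lt_apply_of_sorted hr hdisj hsorted hq (.inr h₁.mem_right))

theorem IsSlackPair.lt_and_lt_of_Icc_ssubset (hr : StrictMono r) (hdisj : Disjoint S T)
    (hsorted : ∀ x y : Fin n, x < y → π.symm y < π.symm x → x ∈ S ∧ y ∈ T)
    {p₁ q₁ p₂ q₂ : Fin n} (h₁ : IsSlackPair π r S T p₁ q₁) (h₂ : IsSlackPair π r S T p₂ q₂)
    (hss : Icc (r (π p₁)) (r (π q₁)) ⊂ Icc (r (π p₂)) (r (π q₂))) :
    q₁ < p₁ ∧ p₂ < q₂ ∧ (p₁ = p₂ ∨ q₁ = q₂) := by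
  obtain ⟨ha, hb⟩ := (Icc_subset_Icc_iff h₁.lt.le).1 hss.subset
  have hadj₁ := h₁.adjacent; have hadj₂ := h₂.adjacent
  rcases h₁.eq_or_eq_of_Icc_subset hr hdisj hsorted h₂ hss.subset with rfl | rfl
  · -- `q₁ ≠ q₂` are the two neighbours of the common position
    have hq : q₁ < q₂ := by
      refine lt_of_le_of_ne (not_lt.1 fun h => hb.not_gt ?_) fun h => hss.ne (by rw [h])
      exact apply_lt_apply_of_sorted hr hdisj hsorted h (.inr h₁.mem_right)
    exact ⟨by omega, by omega, .inl rfl⟩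
  · have hp : p₂ < p₁ := by
      refine lt_of_le_of_ne (not_lt.1 fun h => ha.not_gt ?_) fun h => hss.ne (by rw [h])
      exact apply_lt_apply_of_sorted hr hdisj hsorted h (.inl h₁.mem_left)
    exact ⟨by omega, by omega, .inr rfl⟩

end SlackPairs

theorem slack_interval_lemma_general (n : ℕ) (π : Equiv.Perm (Fin n))
    (ℓ r : Fin n → ℤ) (hrep : IsIntervalRep π ℓ r)
    (S T : Finset (Fin n)) (hdisj : Disjoint S T)
    (hsorted : ∀ x y : Fin n, x < y → π.symm y < π.symm x → x ∈ S ∧ y ∈ T)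
    (a₁ b₁ a₂ b₂ : ℤ)
    (h₁ : IsTSSlack π r S T a₁ b₁ ∨ IsSTSlack π r S T a₁ b₁)
    (h₂ : IsTSSlack π r S T a₂ b₂ ∨ IsSTSlack π r S T a₂ b₂) :
    (Set.Icc a₁ b₁ ⊂ Set.Icc a₂ b₂ →
      IsTSSlack π r S T a₁ b₁ ∧ IsSTSlack π r S T a₂ b₂ ∧
        (a₁ = a₂ ∨ b₁ = b₂)) ∧
    ((¬ Set.Icc a₁ b₁ ⊆ Set.Icc a₂ b₂ ∧ ¬ Set.Icc a₂ b₂ ⊆ Set.Icc a₁ b₁) →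
      a₁ ≠ a₂ ∧ a₁ ≠ b₂ ∧ b₁ ≠ a₂ ∧ b₁ ≠ b₂) := by
  have hr := hrep.strictMono_right
  obtain ⟨p₁, q₁, hpq₁, rfl, rfl⟩ := exists_isSlackPair h₁
  obtain ⟨p₂, q₂, hpq₂, rfl, rfl⟩ := exists_isSlackPair h₂
  have left_ne_right {p q : Fin n} (hp : π p ∈ S) (hq : π q ∈ T) : r (π p) ≠ r (π q) :=
    hr.injective.ne (hdisj.forall_ne_finset hp hq)
  refine ⟨fun hss => ?_, fun ⟨h12, h21⟩ => ⟨fun ha => ?_,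
    left_ne_right hpq₁.mem_left hpq₂.mem_right, (left_ne_right hpq₂.mem_left hpq₁.mem_right).symm,
    fun hb => ?_⟩⟩
  · obtain ⟨hq₁p₁, hp₂q₂, hshared⟩ := hpq₁.lt_and_lt_of_Icc_ssubset hr hdisj hsorted hpq₂ hss
    exact ⟨isTSSlack_iff.2 ⟨p₁, q₁, hpq₁, hq₁p₁, rfl, rfl⟩,
      isSTSlack_iff.2 ⟨p₂, q₂, hpq₂, hp₂q₂, rfl, rfl⟩,
      hshared.imp (fun h => by rw [h]) fun h => by rw [h]⟩
  · rw [ha] at h12 h21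
    rcases le_total (r (π q₁)) (r (π q₂)) with hb | hb
    exacts [h12 (Icc_subset_Icc_right hb), h21 (Icc_subset_Icc_right hb)]
  · rw [hb] at h12 h21
    rcases le_total (r (π p₁)) (r (π p₂)) with ha | ha
    exacts [h21 (Icc_subset_Icc_left ha), h12 (Icc_subset_Icc_left ha)]

/-- For two distinct slack intervals `J₁ = [a₁, b₁]` and `J₂ = [a₂, b₂]` of an
interval representation of `π` with a sorted 2-coloring `(S, T)`:
(i) if `J₁ ⊊ J₂`, then `J₁` is a TS-slack interval, `J₂` is an ST-slack
interval, and they share a left or a right endpoint; (ii) if neither contains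
the other, then they share no endpoint at all. -/
theorem slack_interval_lemma (n : ℕ) (π : Equiv.Perm (Fin n))
    (ℓ r : Fin n → ℤ) (hrep : IsIntervalRep π ℓ r)
    (S T : Finset (Fin n)) (hunion : S ∪ T = Finset.univ) (hdisj : Disjoint S T)
    (hsorted : ∀ x y : Fin n, x < y → π.symm y < π.symm x → x ∈ S ∧ y ∈ T)
    (a₁ b₁ a₂ b₂ : ℤ)
    (h₁ : IsTSSlack π r S T a₁ b₁ ∨ IsSTSlack π r S T a₁ b₁)
    (h₂ : IsTSSlack π r S T a₂ b₂ ∨ IsSTSlack π r S T a₂ b₂)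
    (hne : (a₁, b₁) ≠ (a₂, b₂)) :
    (Set.Icc a₁ b₁ ⊂ Set.Icc a₂ b₂ →
      IsTSSlack π r S T a₁ b₁ ∧ IsSTSlack π r S T a₂ b₂ ∧
        (a₁ = a₂ ∨ b₁ = b₂)) ∧
    ((¬ Set.Icc a₁ b₁ ⊆ Set.Icc a₂ b₂ ∧ ¬ Set.Icc a₂ b₂ ⊆ Set.Icc a₁ b₁) →
      a₁ ≠ a₂ ∧ a₁ ≠ b₂ ∧ b₁ ≠ a₂ ∧ b₁ ≠ b₂) :=
  slack_interval_lemma_general n π ℓ r hrep S T hdisj hsorted a₁ b₁ a₂ b₂ h₁ h₂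
end

section
/- For every interval representation {[ℓ_i, r_i] : 1 ≤ i ≤ 6} of the spring poset, it is not the case that both r_2 − ℓ_2 = r_3 − ℓ_3 and r_4 − ℓ_4 = r_5 − ℓ_5. In particular, a feasible 2-count coloring of an interval order cannot contain a spring with elements 2, 3 colored short and 4, 5 colored long. -/
/-!
Interval 4 lies strictly between `ℓ 2` and `ℓ 3`, because `ℓ 2 ≤ r 1 < ℓ 4` and `r 4 < ℓ 3`;
so if intervals 2 and 3 have equal lengths, `|I₄| < ℓ 3 - ℓ 2 = r 3 - r 2`. Interval 5 meets
both interval 2 and interval 6, which starts after `r 3`, so `|I₅| ≥ ℓ 6 - r 2 > r 3 - r 2`.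
Hence `|I₄| < |I₅|`.
-/

def springRel (x y : ℕ) : Prop :=
  ((x, y) : ℕ × ℕ) ∈
    ({(1, 4), (4, 3), (3, 6), (1, 3), (1, 6), (4, 6), (2, 3), (2, 6), (1, 5)} :
      Set (ℕ × ℕ))

lemma lt_of_springRel {ℓ r : ℕ → ℝ}
    (hrep : ∀ x ∈ Finset.Icc 1 6, ∀ y ∈ Finset.Icc 1 6, (springRel x y ↔ r x < ℓ y))
    {x y : ℕ} (h : springRel x y := by simp [springRel])
    (hx : x ∈ Finset.Icc 1 6 := by decide) (hy : y ∈ Finset.Icc 1 6 := by decide) :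
    r x < ℓ y :=
  (hrep x hx y hy).1 h

lemma le_of_not_springRel {ℓ r : ℕ → ℝ}
    (hrep : ∀ x ∈ Finset.Icc 1 6, ∀ y ∈ Finset.Icc 1 6, (springRel x y ↔ r x < ℓ y))
    {x y : ℕ} (h : ¬ springRel x y := by simp [springRel])
    (hx : x ∈ Finset.Icc 1 6 := by decide) (hy : y ∈ Finset.Icc 1 6 := by decide) :
    ℓ y ≤ r x :=
  not_lt.1 ((hrep x hx y hy).not.1 h)

theorem spring_not_two_count_general (ℓ r : ℕ → ℝ)
    (hrep : ∀ x ∈ Finset.Icc 1 6, ∀ y ∈ Finset.Icc 1 6,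
      (springRel x y ↔ r x < ℓ y)) :
    ¬ (r 2 - ℓ 2 = r 3 - ℓ 3 ∧ r 4 - ℓ 4 = r 5 - ℓ 5) := by
  rintro ⟨h23, h45⟩
  have h21 : ℓ 2 ≤ r 1 := le_of_not_springRel hrep
  have h14 : r 1 < ℓ 4 := lt_of_springRel hrep
  have h43 : r 4 < ℓ 3 := lt_of_springRel hrep
  have h36 : r 3 < ℓ 6 := lt_of_springRel hrep
  have h52 : ℓ 5 ≤ r 2 := le_of_not_springRel hrep
  have h65 : ℓ 6 ≤ r 5 := le_of_not_springRel hrep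
  have h4_lt_5 : r 4 - ℓ 4 < r 5 - ℓ 5 :=
    calc r 4 - ℓ 4 < ℓ 3 - ℓ 2 := by linarith
      _ = r 3 - r 2 := by linarith
      _ < ℓ 6 - r 2 := by linarith
      _ ≤ r 5 - ℓ 5 := by linarith
  exact h4_lt_5.ne h45

/-- In every interval representation `{[ℓ x, r x] : 1 ≤ x ≤ 6}` of the spring
poset, it is not the case that both `r 2 - ℓ 2 = r 3 - ℓ 3` and
`r 4 - ℓ 4 = r 5 - ℓ 5`; that is, intervals 2, 3 cannot share a common length
while intervals 4, 5 share a common length. -/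
theorem spring_not_two_count (ℓ r : ℕ → ℝ)
    (hle : ∀ x ∈ Finset.Icc 1 6, ℓ x ≤ r x)
    (hrep : ∀ x ∈ Finset.Icc 1 6, ∀ y ∈ Finset.Icc 1 6,
      (springRel x y ↔ r x < ℓ y)) :
    ¬ (r 2 - ℓ 2 = r 3 - ℓ 3 ∧ r 4 - ℓ 4 = r 5 - ℓ 5) :=
  spring_not_two_count_general ℓ r hrep
end

section
/- There do not exist real numbers ℓ_1, …, ℓ_6 and r_1, …, r_6 satisfying ℓ_2 ≤ ℓ_1 < ℓ_4, ℓ_5 ≤ r_2, ℓ_4 ≤ r_2, ℓ_2 ≤ r_1 < ℓ_4 ≤ r_4 < ℓ_3 ≤ r_3 < ℓ_6 ≤ r_5, r_2 − ℓ_2 = r_3 − ℓ_3, and r_4 − ℓ_4 = r_5 − ℓ_5. -/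
/-! Interval 3 sits strictly inside the gap `(r₄, r₅)`, and since intervals 4 and 5 have the same
length that gap has length `l₅ - l₄`, which is shorter than interval 2 because `l₅ ≤ r₂` and
`l₂ ≤ r₁ < l₄`. So interval 3 is strictly shorter than interval 2. -/

/-- There are no real numbers `ℓ₁,…,ℓ₆, r₁,…,r₆` satisfying the endpoint
constraints forced by an interval representation of the spring poset in which
intervals 2 and 3 have a common length and intervals 4 and 5 have a common
length. -/
theorem no_spring_endpoints :
    ¬ ∃ l₁ l₂ l₃ l₄ l₅ l₆ r₁ r₂ r₃ r₄ r₅ r₆ : ℝ,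
      l₂ ≤ l₁ ∧ l₁ < l₄ ∧ l₅ ≤ r₂ ∧ l₄ ≤ r₂ ∧
      l₂ ≤ r₁ ∧ r₁ < l₄ ∧ l₄ ≤ r₄ ∧ r₄ < l₃ ∧ l₃ ≤ r₃ ∧ r₃ < l₆ ∧ l₆ ≤ r₅ ∧
      r₂ - l₂ = r₃ - l₃ ∧ r₄ - l₄ = r₅ - l₅ := by
  rintro ⟨-, l₂, l₃, l₄, l₅, l₆, r₁, r₂, r₃, r₄, r₅, -, -, -, hl₅, -, hl₂, hr₁, -, hr₄, -, hr₃, hl₆,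
    hlen₂₃, hlen₄₅⟩
  have : r₃ - l₃ < r₂ - l₂ :=
    calc r₃ - l₃ < r₅ - r₄ := by linarith
      _ = l₅ - l₄ := by linarith
      _ < r₂ - l₂ := by linarith
  exact this.ne hlen₂₃.symm
end

section
/- Let P be the strict partial order on {1,…,11} defined by x ≺ y if and only if r_x < ℓ_y for the intervals I_1=[0,0], I_2=[1,1], I_3=[3,3], I_4=[0,3], I_5=[6,6], I_6=[3,5], I_7=[5,6], I_8=[0,2], I_9=[2,4], I_10=[4,6], I_11=[2,6]. Then P admits no interval representation using at most 2 distinct interval lengths. -/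
/-!
If `a ≺ x ≺ b` while `I_y` meets both `I_a` and `I_b`, then `I_x` lies strictly inside `I_y`, so
`I_x` is strictly shorter. In `P` (indices of `Fin 11`) this makes `I 1` shorter than `I 3`,
`I 2` shorter than `I 8` and `I 5` shorter than `I 10`; with only two lengths available,
`I 1` and `I 5` get the short one and `I 3` and `I 8` the long one. Running the same argument
with the chain `0 ≺ 1 ≺ 8 ≺ 6` and the overlapping pair `I 3`, `I 5` bridging `I 0` to `I 6` gives
`|I 1| + |I 8| < |I 3| + |I 5|`, which is absurd.
-/

/-- Left endpoints of the canonical representation of the interval order with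
ascent sequence `(0,1,2,0,3,2,3,0,2,4,2)` (element `i+1` ↦ index `i`). -/
def canL : Fin 11 → ℝ := ![0, 1, 3, 0, 6, 3, 5, 0, 2, 4, 2]

/-- Right endpoints of the canonical representation of the interval order with
ascent sequence `(0,1,2,0,3,2,3,0,2,4,2)` (element `i+1` ↦ index `i`). -/
def canR : Fin 11 → ℝ := ![0, 1, 3, 3, 6, 5, 6, 2, 4, 6, 6]

section IntervalRepresentation

variable {α : Type*} {prec : α → α → Prop} {ℓ r : α → ℝ}

theorem length_lt_of_nested (hrep : ∀ x y, prec x y ↔ r x < ℓ y) {a x b y : α}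
    (hax : prec a x) (hxb : prec x b) (hay : ¬ prec a y) (hyb : ¬ prec y b) :
    r x - ℓ x < r y - ℓ y := by
  rw [hrep] at hax hxb hay hyb
  linarith

theorem length_add_length_lt_of_nested (hrep : ∀ x y, prec x y ↔ r x < ℓ y)
    {a x₁ x₂ b y₁ y₂ : α} (hax₁ : prec a x₁) (hx₁x₂ : prec x₁ x₂) (hx₂b : prec x₂ b)
    (hay₁ : ¬ prec a y₁) (hy₁y₂ : ¬ prec y₁ y₂) (hy₂b : ¬ prec y₂ b) :
    (r x₁ - ℓ x₁) + (r x₂ - ℓ x₂) < (r y₁ - ℓ y₁) + (r y₂ - ℓ y₂) := by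
  rw [hrep] at hax₁ hx₁x₂ hx₂b hay₁ hy₁y₂ hy₂b
  linarith

end IntervalRepresentation

theorem eq_and_eq_of_lt_of_lt_of_ncard_range_le_two {ι β : Type*} [Finite ι] [LinearOrder β]
    {f : ι → β} (hf : (Set.range f).ncard ≤ 2) {a b c d : ι} (hab : f a < f b)
    (hcd : f c < f d) : f a = f c ∧ f b = f d := by
  have no_three : ∀ i j k, f i < f j → f j < f k → False := fun i j k hij hjk =>
    hf.not_gt <| (Set.two_lt_ncard (Set.toFinite _)).2
      ⟨f i, ⟨i, rfl⟩, f j, ⟨j, rfl⟩, f k, ⟨k, rfl⟩, hij.ne, (hij.trans hjk).ne, hjk.ne⟩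
  have hac : f a = f c := by
    rcases lt_trichotomy (f a) (f c) with h | h | h
    · exact (no_three a c d h hcd).elim
    · exact h
    · exact (no_three c a b h hab).elim
  refine ⟨hac, ?_⟩
  rcases lt_trichotomy (f b) (f d) with h | h | h
  · exact (no_three a b d hab h).elim
  · exact h
  · exact (no_three c d b hcd h).elim

/-- The interval order on `{1,…,11}` given by the intervals
`I₁=[0,0], I₂=[1,1], I₃=[3,3], I₄=[0,3], I₅=[6,6], I₆=[3,5], I₇=[5,6],
I₈=[0,2], I₉=[2,4], I₁₀=[4,6], I₁₁=[2,6]` (where `x ≺ y` iff `canR x < canL y`)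
admits no interval representation using at most 2 distinct interval lengths. -/
theorem ascent_order_not_two_count :
    ¬ ∃ ℓ r : Fin 11 → ℝ, (∀ x, ℓ x ≤ r x) ∧
      (∀ x y, canR x < canL y ↔ r x < ℓ y) ∧
      Set.ncard {d : ℝ | ∃ x : Fin 11, d = r x - ℓ x} ≤ 2 := by
  rintro ⟨ℓ, r, -, hrep, hcard⟩
  obtain ⟨h13, h28, h510, hchain⟩ :
      r 1 - ℓ 1 < r 3 - ℓ 3 ∧ r 2 - ℓ 2 < r 8 - ℓ 8 ∧ r 5 - ℓ 5 < r 10 - ℓ 10 ∧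
        (r 1 - ℓ 1) + (r 8 - ℓ 8) < (r 3 - ℓ 3) + (r 5 - ℓ 5) := by
    refine ⟨length_lt_of_nested hrep (a := 0) (b := 2) ?_ ?_ ?_ ?_,
      length_lt_of_nested hrep (a := 7) (b := 9) ?_ ?_ ?_ ?_,
      length_lt_of_nested hrep (a := 7) (b := 4) ?_ ?_ ?_ ?_,
      length_add_length_lt_of_nested hrep (a := 0) (b := 6) ?_ ?_ ?_ ?_ ?_ ?_⟩ <;>
    simp only [canL, canR, Matrix.cons_val] <;> norm_num
  have hrange : (Set.range fun x => r x - ℓ x).ncard ≤ 2 := by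
    simpa only [Set.range, eq_comm] using hcard
  have h38 := (eq_and_eq_of_lt_of_lt_of_ncard_range_le_two hrange h13 h28).2
  have h15 := (eq_and_eq_of_lt_of_lt_of_ncard_range_le_two hrange h13 h510).1
  linarith
end

section
/- The permutation π = [4, 2, 5, 10, 3, 1, 7, 6, 9, 8] of {1,…,10} (that is, π(1)=4, π(2)=2, π(3)=5, π(4)=10, π(5)=3, π(6)=1, π(7)=7, π(8)=6, π(9)=9, π(10)=8) admits no interval representation using at most 3 distinct interval lengths. -/
open Finset

theorem Finset.eq_or_eq_or_eq_of_card_le_three {α : Type*} [DecidableEq α] {s : Finset α}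
    (hs : #s ≤ 3) {a b c x : α} (ha : a ∈ s) (hb : b ∈ s) (hc : c ∈ s) (hab : a ≠ b)
    (hac : a ≠ c) (hbc : b ≠ c) (hx : x ∈ s) : x = a ∨ x = b ∨ x = c := by
  have hsub : {a, b, c} ⊆ s :=
    insert_subset ha (insert_subset hb (singleton_subset_iff.2 hc))
  have hcard : #({a, b, c} : Finset α) = 3 := card_eq_three.2 ⟨a, b, c, hab, hac, hbc, rfl⟩
  rw [← eq_of_subset_of_card_le hsub (hcard ▸ hs)] at hx
  simpa only [mem_insert, mem_singleton] using hx

section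

variable {ℓ r : Fin 10 → ℤ}

theorem length_classes_of_card_image_le_three
    (hℓ : StrictMono fun i => ℓ (![3, 1, 4, 9, 2, 0, 6, 5, 8, 7] i)) (hr : StrictMono r)
    (hcard : #(image (fun j => r j - ℓ j) univ) ≤ 3) :
    r 5 - ℓ 5 = r 0 - ℓ 0 ∧ r 6 - ℓ 6 = r 2 - ℓ 2 ∧ r 8 - ℓ 8 = r 2 - ℓ 2 ∧
      r 1 - ℓ 1 = r 2 - ℓ 2 ∧ r 9 - ℓ 9 = r 4 - ℓ 4 := by
  simp only [Fin.strictMono_iff_lt_succ, Fin.forall_fin_succ, Fin.isValue, Fin.castSucc_zero,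
    Fin.castSucc_succ, Fin.succ_zero_eq_one, Fin.succ_one_eq_two, Fin.reduceSucc,
    Matrix.cons_val_zero, Matrix.cons_val_succ, Matrix.cons_val_fin_one, IsEmpty.forall_iff,
    and_true] at hℓ hr
  have mem (j : Fin 10) : r j - ℓ j ∈ image (fun j => r j - ℓ j) univ :=
    mem_image_of_mem _ (mem_univ j)
  have h02 : r 0 - ℓ 0 < r 2 - ℓ 2 := by omega
  have h24 : r 2 - ℓ 2 < r 4 - ℓ 4 := by omega
  have three (j : Fin 10) :
      r j - ℓ j = r 0 - ℓ 0 ∨ r j - ℓ j = r 2 - ℓ 2 ∨ r j - ℓ j = r 4 - ℓ 4 :=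
    eq_or_eq_or_eq_of_card_le_three hcard (mem 0) (mem 2) (mem 4) h02.ne (by omega) h24.ne (mem j)
  -- Nestings: `2 ⊂ 3`, `2 ⊂ 9`, `5 ⊂ 6 ⊂ 9`, `7 ⊂ 8 ⊂ 9` and `0 ⊂ 1 ⊂ 3`.
  have h9 : r 9 - ℓ 9 = r 4 - ℓ 4 := by rcases three 9 with h | h | h <;> omega
  have h3 : r 3 - ℓ 3 = r 4 - ℓ 4 := by rcases three 3 with h | h | h <;> omega
  have h56 : r 5 - ℓ 5 = r 0 - ℓ 0 ∧ r 6 - ℓ 6 = r 2 - ℓ 2 := by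
    rcases three 5 with h5 | h5 | h5 <;> rcases three 6 with h6 | h6 | h6 <;> omega
  have h8 : r 8 - ℓ 8 = r 2 - ℓ 2 := by
    rcases three 7 with h7 | h7 | h7 <;> rcases three 8 with h8 | h8 | h8 <;> omega
  have h1 : r 1 - ℓ 1 = r 2 - ℓ 2 := by rcases three 1 with h | h | h <;> omega
  exact ⟨h56.1, h56.2, h8, h1, h9⟩

theorem false_of_length_classes (hℓ : StrictMono fun i => ℓ (![3, 1, 4, 9, 2, 0, 6, 5, 8, 7] i))
    (hr : StrictMono r) (h05 : r 5 - ℓ 5 = r 0 - ℓ 0) (h26 : r 6 - ℓ 6 = r 2 - ℓ 2)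
    (h68 : r 8 - ℓ 8 = r 2 - ℓ 2) (h12 : r 1 - ℓ 1 = r 2 - ℓ 2) (h49 : r 9 - ℓ 9 = r 4 - ℓ 4) :
    False := by
  have hℓ14 : ℓ 1 < ℓ 4 := hℓ (show (1 : Fin 10) < 2 by decide)
  have hℓ92 : ℓ 9 < ℓ 2 := hℓ (show (3 : Fin 10) < 4 by decide)
  have hℓ20 : ℓ 2 < ℓ 0 := hℓ (show (4 : Fin 10) < 5 by decide)
  have hℓ58 : ℓ 5 < ℓ 8 := hℓ (show (7 : Fin 10) < 8 by decide)
  have hr01 : r 0 < r 1 := hr (by decide)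
  have hr45 : r 4 < r 5 := hr (by decide)
  have hr89 : r 8 < r 9 := hr (by decide)
  have : ℓ 5 - ℓ 6 < ℓ 5 - ℓ 6 :=
    calc ℓ 5 - ℓ 6 < ℓ 8 - ℓ 6 := by omega
      _ = r 8 - r 6 := by linear_combination h26 - h68
      _ < (r 9 - r 4) - (r 6 - r 5) := by omega
      _ = (ℓ 9 - ℓ 4) - (r 6 - r 5) := by linear_combination h49
      _ < (ℓ 2 - ℓ 1) - (r 6 - r 5) := by omega
      _ = (r 2 - r 1) - (r 6 - r 5) := by linear_combination h12
      _ < (r 2 - r 0) - (r 6 - r 5) + (ℓ 0 - ℓ 2) := by omega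
      _ = ℓ 5 - ℓ 6 := by linear_combination h05 - h26
  exact lt_irrefl _ this

end

/-- The permutation `[4, 2, 5, 10, 3, 1, 7, 6, 9, 8]` of `{1,…,10}` (written
0-indexed: `i ↦ ![3,1,4,9,2,0,6,5,8,7] i`) admits no interval representation
using at most 3 distinct interval lengths. -/
theorem specific_permutation_not_three_count (π : Equiv.Perm (Fin 10))
    (hπ : ∀ i : Fin 10, π i = ![3, 1, 4, 9, 2, 0, 6, 5, 8, 7] i) :
    ¬ ∃ ℓ r : Fin 10 → ℤ, IsIntervalRep π ℓ r ∧
      (Finset.image (fun j => r j - ℓ j) Finset.univ).card ≤ 3 := by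
  rintro ⟨ℓ, r, ⟨hleft, -, hright⟩, hcard⟩
  have hℓ : StrictMono fun i => ℓ (![3, 1, 4, 9, 2, 0, 6, 5, 8, 7] i) := fun i j hij => by
    simpa only [hπ] using hleft i j hij
  obtain ⟨h05, h26, h68, h12, h49⟩ := length_classes_of_card_image_le_three hℓ hright hcard
  exact false_of_length_classes hℓ hright h05 h26 h68 h12 h49
end

section
/- There exists a permutation of {1,…,10} whose longest strictly decreasing subsequence has length exactly 3 but which admits no interval representation using at most 3 distinct interval lengths. (Hence, for k = 3, having depth at most k does not imply the existence of a k-count interval representation.) -/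
open Finset

theorem not_exists_decreasing_subseq_of_increasing_coloring {α β : Type*} [LinearOrder α]
    [LinearOrder β] {k : ℕ} (π : α → β) (c : α → Fin k)
    (hc : ∀ a b, a < b → c a = c b → π a < π b) :
    ¬ ∃ f : Fin (k + 1) → α, StrictMono f ∧ ∀ i j, i < j → π (f j) < π (f i) := by
  rintro ⟨f, hf, hdec⟩
  obtain ⟨i, j, hij, hcij⟩ := Fintype.exists_ne_map_eq_of_card_lt (c ∘ f) (by simp)
  rcases hij.lt_or_gt with h | h
  · exact lt_asymm (hc _ _ (hf h) hcij) (hdec i j h)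
  · exact lt_asymm (hc _ _ (hf h) hcij.symm) (hdec j i h)

theorem Finset.strictMono_eq_of_card_le {α : Type*} [LinearOrder α] {s : Finset α} {k : ℕ}
    (hs : #s ≤ k) {f g : Fin k → α} (hf : StrictMono f) (hg : StrictMono g)
    (hfs : ∀ i, f i ∈ s) (hgs : ∀ i, g i ∈ s) : f = g := by
  have hcard : #s = k := by
    refine hs.antisymm ?_
    calc k = #(univ.image f) := by rw [card_image_of_injective _ hf.injective, card_fin]
      _ ≤ #s := card_le_card (image_subset_iff.mpr fun i _ => hfs i)
  rw [orderEmbOfFin_unique hcard hfs hf, orderEmbOfFin_unique hcard hgs hg]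

namespace IsIntervalRep

variable {n : ℕ} {π : Equiv.Perm (Fin n)} {ℓ r : Fin n → ℤ}

theorem left_lt_left (h : IsIntervalRep π ℓ r) {i j : Fin n} (hij : π.symm i < π.symm j) :
    ℓ i < ℓ j := by
  simpa using h.1 _ _ hij

theorem strictMono_length_comp (h : IsIntervalRep π ℓ r) {α : Type*} [Preorder α]
    {c : α → Fin n} (hc : StrictMono c) (hnested : StrictAnti (π.symm ∘ c)) :
    StrictMono fun a => r (c a) - ℓ (c a) := by
  intro a b hab
  have hℓ := h.left_lt_left (hnested hab)
  have hr := h.2.2 _ _ (hc hab)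
  show r (c a) - ℓ (c a) < r (c b) - ℓ (c b)
  omega

end IsIntervalRep

/-- `3 2 5 4 10 1 8 6 9 7` in one-line notation, shifted down to `Fin 10`. -/
def counterexamplePerm : Equiv.Perm (Fin 10) :=
  ⟨![2, 1, 4, 3, 9, 0, 7, 5, 8, 6], ![5, 1, 0, 3, 2, 7, 9, 6, 8, 4], by decide, by decide⟩

theorem three_lt_card_lengths_of_isIntervalRep_counterexamplePerm {ℓ r : Fin 10 → ℤ}
    (h : IsIntervalRep counterexamplePerm ℓ r) :
    3 < #(univ.image fun j => r j - ℓ j) := by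
  by_contra! hcard
  have nested_lengths (c : Fin 3 → Fin 10) (hc : StrictMono c)
      (hnested : StrictAnti (counterexamplePerm.symm ∘ c)) :
      (fun a => r (c a) - ℓ (c a)) = fun a => r (![0, 1, 2] a) - ℓ (![0, 1, 2] a) :=
    strictMono_eq_of_card_le hcard (h.strictMono_length_comp hc hnested)
      (h.strictMono_length_comp (by decide) (by decide))
      (fun _ => mem_image_of_mem _ (mem_univ _)) (fun _ => mem_image_of_mem _ (mem_univ _))
  have len4 := congrFun (nested_lengths ![0, 3, 4] (by decide) (by decide)) 2
  have len5 := congrFun (nested_lengths ![5, 7, 9] (by decide) (by decide)) 0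
  have len8 := congrFun (nested_lengths ![6, 8, 9] (by decide) (by decide)) 1
  have len9 := congrFun (nested_lengths ![5, 7, 9] (by decide) (by decide)) 2
  simp only [Matrix.cons_val] at len4 len5 len8 len9
  have r01 := h.2.2 0 1 (by decide)
  have r45 := h.2.2 4 5 (by decide)
  have r89 := h.2.2 8 9 (by decide)
  have ℓ14 := h.left_lt_left (i := 1) (j := 4) (by decide)
  have ℓ58 := h.left_lt_left (i := 5) (j := 8) (by decide)
  have ℓ90 := h.left_lt_left (i := 9) (j := 0) (by decide)
  omega

/-- There is a permutation of `{1,…,10}` whose longest strictly decreasing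
subsequence has length exactly 3 (it has one of length 3 but none of length 4)
yet which admits no interval representation with at most 3 distinct interval
lengths. -/
theorem exists_depth_three_not_three_count :
    ∃ π : Equiv.Perm (Fin 10),
      (∃ f : Fin 3 → Fin 10, StrictMono f ∧
        ∀ i j : Fin 3, i < j → π (f j) < π (f i)) ∧
      (¬ ∃ f : Fin 4 → Fin 10, StrictMono f ∧
        ∀ i j : Fin 4, i < j → π (f j) < π (f i)) ∧
      ¬ ∃ ℓ r : Fin 10 → ℤ, IsIntervalRep π ℓ r ∧
        (Finset.image (fun j => r j - ℓ j) Finset.univ).card ≤ 3 := by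
  refine ⟨counterexamplePerm, ⟨![4, 6, 9], by decide, by decide⟩,
    not_exists_decreasing_subseq_of_increasing_coloring counterexamplePerm
      ![0, 1, 0, 1, 0, 2, 1, 2, 1, 2] (by decide), ?_⟩
  rintro ⟨ℓ, r, h, hcard⟩
  exact hcard.not_gt (three_lt_card_lengths_of_isIntervalRep_counterexamplePerm h)
end

section
/- There do not exist real numbers ℓ_1, ℓ_2, ℓ_5, ℓ_6, ℓ_9, ℓ_10 and r_1, r_2, r_5, r_6, r_9, r_10 satisfying ℓ_2 < ℓ_5 < ℓ_10 < ℓ_1 < ℓ_6 < ℓ_9, r_1 < r_2 < r_5 < r_6 < r_9 < r_10, ℓ_6 − ℓ_1 = r_6 − r_1, ℓ_9 − ℓ_2 = r_9 − r_2, and ℓ_10 − ℓ_5 = r_10 − r_5. (Consequently, the sorted 3-coloring T_1 = {1,6}, T_2 = {2,9}, T_3 = {5,10} of the permutation [2, 5, 10, 1, 6, 9] is infeasible.) -/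
/-!
On the left, the interval `[l₂, l₉]` contains the disjoint intervals `[l₅, l₁₀]` and `[l₁, l₆]`,
so it is longer than both together; on the right, `[r₂, r₉]` is covered by the overlapping
intervals `[r₁, r₆]` and `[r₅, r₁₀]`, so it is shorter than both together. The three
equal-length constraints turn these into `r₉ - r₂ < r₉ - r₂`.
-/

section IntervalLengths

variable {α : Type*} [AddCommGroup α] [LinearOrder α] [IsOrderedAddMonoid α] {a b c d e f : α}

theorem sub_add_sub_lt_sub_of_le_of_lt_of_le (hab : a ≤ b) (hcd : c < d) (hef : e ≤ f) :
    (c - b) + (e - d) < f - a := by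
  grind

theorem sub_lt_sub_add_sub_of_le_of_lt_of_le (hab : a ≤ b) (hcd : c < d) (hef : e ≤ f) :
    e - b < (d - a) + (f - c) := by
  grind

end IntervalLengths

/-- There are no real numbers `ℓ₁, ℓ₂, ℓ₅, ℓ₆, ℓ₉, ℓ₁₀` and
`r₁, r₂, r₅, r₆, r₉, r₁₀` realizing the endpoint orderings forced by an
interval representation of the permutation `[2, 5, 10, 1, 6, 9]` in which the
intervals `1` and `6` have equal length, the intervals `2` and `9` have equal
length, and the intervals `5` and `10` have equal length. -/
theorem infeasible_sorted_three_coloring :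
    ¬ ∃ l₁ l₂ l₅ l₆ l₉ l₁₀ r₁ r₂ r₅ r₆ r₉ r₁₀ : ℝ,
      l₂ < l₅ ∧ l₅ < l₁₀ ∧ l₁₀ < l₁ ∧ l₁ < l₆ ∧ l₆ < l₉ ∧
      r₁ < r₂ ∧ r₂ < r₅ ∧ r₅ < r₆ ∧ r₆ < r₉ ∧ r₉ < r₁₀ ∧
      l₆ - l₁ = r₆ - r₁ ∧ l₉ - l₂ = r₉ - r₂ ∧ l₁₀ - l₅ = r₁₀ - r₅ := by
  rintro ⟨l₁, l₂, l₅, l₆, l₉, l₁₀, r₁, r₂, r₅, r₆, r₉, r₁₀,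
    hl₂₅, -, hl₁₀₁, -, hl₆₉, hr₁₂, -, hr₅₆, -, hr₉₁₀, h₁₆, h₂₉, h₅₁₀⟩
  have := calc
    r₉ - r₂ = l₉ - l₂ := h₂₉.symm
    _ > (l₁₀ - l₅) + (l₆ - l₁) :=
      sub_add_sub_lt_sub_of_le_of_lt_of_le hl₂₅.le hl₁₀₁ hl₆₉.le
    _ = (r₆ - r₁) + (r₁₀ - r₅) := by rw [h₅₁₀, h₁₆, add_comm]
    _ > r₉ - r₂ := sub_lt_sub_add_sub_of_le_of_lt_of_le hr₁₂.le hr₅₆ hr₉₁₀.le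
  exact lt_irrefl _ this
end
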